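/- Let M be a compact metric space, f, g : M × M → ℝ continuous functions, and (Ω, P) a probability space. Let ((X_k, Y_k))_{k≥1} be an i.i.d. sequence of (M × M)-valued random variables, and let (p_N) be a sequence of measurable maps Ω → M converging almost surely to a point p ∈ M. Define the empirical covariance Ĉ_N = (1/N) Σ_{k=1}^N f(p_N, X_k) g(p_N, Y_k) − ((1/N) Σ_{k=1}^N f(p_N, X_k)) · ((1/N) Σ_{k=1}^N g(p_N, Y_k)). Then Ĉ_N → E[f(p, X_1) g(p, Y_1)] − E[f(p, X_1)] · E[g(p, Y_1)] almost surely as N → ∞. -/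

import Mathlib

/-!
By the strong law of large numbers, each of the three empirical means, evaluated at the fixed
point `p`, converges almost surely to its expectation. Since the sample space `M × M` is compact,
`f(q, ·)` and `g(q, ·)` converge uniformly to `f(p, ·)` and `g(p, ·)` as `q → p`, so replacing
`p` by the random base point `p_N` perturbs each empirical mean by at most a sup-norm distance
that tends to zero.
-/

open MeasureTheory Filter ProbabilityTheory Topology Finset

lemma abs_average_le {a : ℕ → ℝ} {C : ℝ} (hC : 0 ≤ C) {N : ℕ}
    (h : ∀ k < N, |a k| ≤ C) :
    |(∑ k ∈ range N, a k) / N| ≤ C := by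
  rcases N.eq_zero_or_pos with rfl | hN
  · simpa using hC
  rw [abs_div, Nat.abs_cast, div_le_iff₀ (by exact_mod_cast hN)]
  calc |∑ k ∈ range N, a k| ≤ ∑ k ∈ range N, |a k| := abs_sum_le_sum_abs _ _
    _ ≤ ∑ _k ∈ range N, C := sum_le_sum fun k hk => h k (mem_range.1 hk)
    _ = C * N := by rw [sum_const, card_range, nsmul_eq_mul, mul_comm]

lemma tendsto_average_of_tendstoUniformly {K : Type*} {u : ℕ → K → ℝ} {φ : K → ℝ}
    (hu : TendstoUniformly u φ atTop) (z : ℕ → K) {L : ℝ}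
    (hφ : Tendsto (fun N : ℕ => (∑ k ∈ range N, φ (z k)) / N) atTop (𝓝 L)) :
    Tendsto (fun N : ℕ => (∑ k ∈ range N, u N (z k)) / N) atTop (𝓝 L) := by
  have hdiff : Tendsto (fun N : ℕ => (∑ k ∈ range N, (u N (z k) - φ (z k))) / N)
      atTop (𝓝 0) := by
    rw [Metric.tendsto_nhds]
    intro ε hε
    filter_upwards [Metric.tendstoUniformly_iff.mp hu (ε / 2) (half_pos hε)] with N hN
    rw [Real.dist_0_eq_abs]
    refine (abs_average_le (half_pos hε).le fun k _ => ?_).trans_lt (half_lt_self hε)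
    rw [← Real.dist_eq, dist_comm]
    exact (hN _).le
  simpa [sum_sub_distrib, sub_div] using hdiff.add hφ

lemma tendstoUniformly_of_continuous_of_tendsto {ι T K : Type*} [TopologicalSpace T]
    [TopologicalSpace K] [CompactSpace K] {h : T × K → ℝ} (hh : Continuous h)
    {l : Filter ι} {q : ι → T} {p : T} (hq : Tendsto q l (𝓝 p)) :
    TendstoUniformly (fun i z => h (q i, z)) (fun z => h (p, z)) l :=
  ContinuousMap.tendsto_iff_tendstoUniformly.mp
    (((ContinuousMap.mk h hh).curry.continuous.tendsto p).comp hq)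

lemma integrable_comp_of_continuous {Ω K : Type*} [MeasurableSpace Ω] {P : Measure Ω}
    [IsFiniteMeasure P] [TopologicalSpace K] [CompactSpace K] [MeasurableSpace K]
    [OpensMeasurableSpace K] {φ : K → ℝ} (hφ : Continuous φ) {Z : Ω → K}
    (hZ : AEMeasurable Z P) : Integrable (fun ω => φ (Z ω)) P := by
  obtain ⟨C, hC⟩ := isCompact_univ.exists_bound_of_continuousOn hφ.continuousOn
  exact .of_bound (hφ.measurable.comp_aemeasurable hZ).aestronglyMeasurable C
    (ae_of_all _ fun ω => hC _ (Set.mem_univ _))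

lemma strong_law_ae_of_continuous {Ω K : Type*} [MeasurableSpace Ω] {P : Measure Ω}
    [IsFiniteMeasure P] [TopologicalSpace K] [CompactSpace K] [MeasurableSpace K]
    [OpensMeasurableSpace K] {φ : K → ℝ} (hφ : Continuous φ) {Z : ℕ → Ω → K}
    (hindep : Pairwise fun i j => IndepFun (Z i) (Z j) P)
    (hident : ∀ k, IdentDistrib (Z k) (Z 0) P P) :
    ∀ᵐ ω ∂P, Tendsto (fun N : ℕ => (∑ k ∈ range N, φ (Z k ω)) / N) atTop
      (𝓝 (∫ ω, φ (Z 0 ω) ∂P)) :=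
  strong_law_ae_real (fun k ω => φ (Z k ω))
    (integrable_comp_of_continuous hφ (hident 0).aemeasurable_fst)
    (fun _ _ hij => (hindep hij).comp hφ.measurable hφ.measurable)
    (fun k => (hident k).comp hφ.measurable)

lemma strong_law_ae_of_continuous_of_tendsto {Ω T K : Type*} [MeasurableSpace Ω] {P : Measure Ω}
    [IsFiniteMeasure P] [TopologicalSpace T] [TopologicalSpace K] [CompactSpace K]
    [MeasurableSpace K] [OpensMeasurableSpace K] {h : T × K → ℝ} (hh : Continuous h)
    {Z : ℕ → Ω → K} (hindep : Pairwise fun i j => IndepFun (Z i) (Z j) P)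
    (hident : ∀ k, IdentDistrib (Z k) (Z 0) P P) {q : ℕ → Ω → T} {p : T}
    (hq : ∀ᵐ ω ∂P, Tendsto (fun N => q N ω) atTop (𝓝 p)) :
    ∀ᵐ ω ∂P, Tendsto (fun N : ℕ => (∑ k ∈ range N, h (q N ω, Z k ω)) / N) atTop
      (𝓝 (∫ ω, h (p, Z 0 ω) ∂P)) := by
  filter_upwards [strong_law_ae_of_continuous (hh.comp (Continuous.prodMk_right p)) hindep hident,
    hq] with ω hlaw hqω
  exact tendsto_average_of_tendstoUniformly
    (tendstoUniformly_of_continuous_of_tendsto hh hqω) (fun k => Z k ω) hlaw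

theorem empirical_covariance_strong_consistency_general
    {M : Type*} [MetricSpace M] [CompactSpace M]
    [MeasurableSpace M] [BorelSpace M]
    (f g : M × M → ℝ) (hf : Continuous f) (hg : Continuous g)
    {Ω : Type*} [MeasurableSpace Ω] (P : Measure Ω) [IsProbabilityMeasure P]
    (X Y : ℕ → Ω → M)
    (hindep : iIndepFun (fun k ω => (X k ω, Y k ω)) P)
    (hident : ∀ k, IdentDistrib (fun ω => (X k ω, Y k ω)) (fun ω => (X 0 ω, Y 0 ω)) P P)
    (pN : ℕ → Ω → M) (p : M)
    (hconv : ∀ᵐ ω ∂P, Tendsto (fun N => pN N ω) atTop (nhds p)) :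
    ∀ᵐ ω ∂P, Tendsto
      (fun N : ℕ =>
        (∑ k ∈ Finset.range N, f (pN N ω, X k ω) * g (pN N ω, Y k ω)) / N -
          ((∑ k ∈ Finset.range N, f (pN N ω, X k ω)) / N) *
            ((∑ k ∈ Finset.range N, g (pN N ω, Y k ω)) / N))
      atTop
      (nhds ((∫ ω', f (p, X 0 ω') * g (p, Y 0 ω') ∂P) -
        (∫ ω', f (p, X 0 ω') ∂P) * ∫ ω', g (p, Y 0 ω') ∂P)) := by
  have hpair : Pairwise fun i j =>
      IndepFun (fun ω => (X i ω, Y i ω)) (fun ω => (X j ω, Y j ω)) P :=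
    fun _ _ hij => hindep.indepFun hij
  have hfX : Continuous fun q : M × (M × M) => f (q.1, q.2.1) := by fun_prop
  have hgY : Continuous fun q : M × (M × M) => g (q.1, q.2.2) := by fun_prop
  filter_upwards [strong_law_ae_of_continuous_of_tendsto (hfX.mul hgY) hpair hident hconv,
    strong_law_ae_of_continuous_of_tendsto hfX hpair hident hconv,
    strong_law_ae_of_continuous_of_tendsto hgY hpair hident hconv]
    with ω hmean_fg hmean_f hmean_g
  exact hmean_fg.sub (hmean_f.mul hmean_g)

/-- Entrywise strong consistency of the sample Riemannian cross-covariance (Theorem 4.3):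
the empirical covariance
`Ĉ_N = (1/N) Σ f(p_N,X_k) g(p_N,Y_k) − ((1/N) Σ f(p_N,X_k))·((1/N) Σ g(p_N,Y_k))`
converges a.s. to `E[f(p,X_1) g(p,Y_1)] − E[f(p,X_1)]·E[g(p,Y_1)]`. -/
theorem empirical_covariance_strong_consistency
    {M : Type*} [MetricSpace M] [CompactSpace M]
    [MeasurableSpace M] [BorelSpace M]
    (f g : M × M → ℝ) (hf : Continuous f) (hg : Continuous g)
    {Ω : Type*} [MeasurableSpace Ω] (P : Measure Ω) [IsProbabilityMeasure P]
    (X Y : ℕ → Ω → M) (hXY : ∀ k, Measurable (fun ω => (X k ω, Y k ω)))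
    (hindep : iIndepFun (fun k ω => (X k ω, Y k ω)) P)
    (hident : ∀ k, IdentDistrib (fun ω => (X k ω, Y k ω)) (fun ω => (X 0 ω, Y 0 ω)) P P)
    (pN : ℕ → Ω → M) (hpN : ∀ N, Measurable (pN N)) (p : M)
    (hconv : ∀ᵐ ω ∂P, Tendsto (fun N => pN N ω) atTop (nhds p)) :
    ∀ᵐ ω ∂P, Tendsto
      (fun N : ℕ =>
        (∑ k ∈ Finset.range N, f (pN N ω, X k ω) * g (pN N ω, Y k ω)) / N -
          ((∑ k ∈ Finset.range N, f (pN N ω, X k ω)) / N) *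
            ((∑ k ∈ Finset.range N, g (pN N ω, Y k ω)) / N))
      atTop
      (nhds ((∫ ω', f (p, X 0 ω') * g (p, Y 0 ω') ∂P) -
        (∫ ω', f (p, X 0 ω') ∂P) * ∫ ω', g (p, Y 0 ω') ∂P)) :=
  empirical_covariance_strong_consistency_general f g hf hg P X Y hindep hident pN p hconv
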